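/- Let L and F be finite-dimensional coalgebras over a field k, let x : L → End(F) and y : F → End(L) be linear maps whose values are right invariant operators satisfying ε_F(x(l)(f)) = ε_L(y(f)(l)) for all l ∈ L, f ∈ F, and let π_x : T(L) → End(T(F)) and π_y : T(F) → End(T(L)) be the associated algebra homomorphisms. Then for w ∈ T(L): π_x(w) = 0 if and only if ε_{T(L)}(π_y(v)(τ(w))) = 0 for all v ∈ T(F). -/

import Mathlib

open TensorProduct

/-- The unique algebra homomorphism `ε_{T(M)} : T(M) → k` with `ε_{T(M)}(ι m) = ε_M m`. -/
noncomputable def counitTensorAlgebra (k M : Type*) [Field k] [AddCommGroup M] [Module k M]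
    [Coalgebra k M] : TensorAlgebra k M →ₐ[k] k :=
  TensorAlgebra.lift k (Coalgebra.counit : M →ₗ[k] k)

set_option maxRecDepth 8000
set_option maxHeartbeats 1000000
set_option synthInstance.maxHeartbeats 200000



section TAux

variable (k M : Type*) [Field k] [AddCommGroup M] [Module k M] [Coalgebra k M]

/-- Comultiplication on the tensor algebra. -/
noncomputable def comulTA :
    TensorAlgebra k M →ₐ[k] TensorAlgebra k M ⊗[k] TensorAlgebra k M :=
  TensorAlgebra.lift k
    ((TensorProduct.map (TensorAlgebra.ι k) (TensorAlgebra.ι k)) ∘ₗ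
      (Coalgebra.comul : M →ₗ[k] M ⊗[k] M))

/-- Reversal anti-automorphism of the tensor algebra. -/
noncomputable def trev : TensorAlgebra k M →ₗ[k] TensorAlgebra k M :=
  (MulOpposite.opLinearEquiv k).symm.toLinearMap ∘ₗ
    (TensorAlgebra.lift k
      ((MulOpposite.opLinearEquiv k (M := TensorAlgebra k M)).toLinearMap ∘ₗ
        TensorAlgebra.ι k)).toLinearMap

variable {k M}

@[simp] lemma counitTA_ι (m : M) :
    counitTensorAlgebra k M (TensorAlgebra.ι k m) = Coalgebra.counit m := by
  simp [counitTensorAlgebra]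

@[simp] lemma comulTA_ι (m : M) :
    comulTA k M (TensorAlgebra.ι k m) =
      TensorProduct.map (TensorAlgebra.ι k) (TensorAlgebra.ι k) (Coalgebra.comul m) := by
  simp [comulTA]

@[simp] lemma trev_ι (m : M) : trev k M (TensorAlgebra.ι k m) = TensorAlgebra.ι k m := by
  simp [trev]

@[simp] lemma trev_one : trev k M 1 = 1 := by
  simp [trev]

lemma trev_mul (a b : TensorAlgebra k M) : trev k M (a * b) = trev k M b * trev k M a := by
  simp [trev]

@[simp] lemma trev_algebraMap (r : k) :
    trev k M (algebraMap k (TensorAlgebra k M) r) = algebraMap k (TensorAlgebra k M) r := by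
  simp [trev]

@[simp] lemma trev_trev (v : TensorAlgebra k M) : trev k M (trev k M v) = v := by
  induction v using TensorAlgebra.induction with
  | algebraMap r => simp
  | ι m => simp
  | mul a b ha hb => rw [trev_mul, trev_mul, ha, hb]
  | add a b ha hb => rw [map_add, map_add, ha, hb]

lemma counitTA_trev (v : TensorAlgebra k M) :
    counitTensorAlgebra k M (trev k M v) = counitTensorAlgebra k M v := by
  induction v using TensorAlgebra.induction with
  | algebraMap r => simp
  | ι m => simp
  | mul a b ha hb => rw [trev_mul, map_mul, map_mul, ha, hb, mul_comm]
  | add a b ha hb => rw [map_add, map_add, map_add, ha, hb]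

lemma trev_comp_ι : trev k M ∘ₗ TensorAlgebra.ι k = TensorAlgebra.ι k :=
  LinearMap.ext trev_ι

lemma map_trev_trev_mul (s t : TensorAlgebra k M ⊗[k] TensorAlgebra k M) :
    TensorProduct.map (trev k M) (trev k M) (s * t) =
      TensorProduct.map (trev k M) (trev k M) t * TensorProduct.map (trev k M) (trev k M) s := by
  induction s with
  | zero => simp
  | tmul a b =>
    induction t with
    | zero => simp
    | tmul c d => simp [Algebra.TensorProduct.tmul_mul_tmul, trev_mul]
    | add t₁ t₂ h₁ h₂ => rw [mul_add, map_add, map_add, h₁, h₂, add_mul]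
  | add s₁ s₂ h₁ h₂ => rw [add_mul, map_add, map_add, h₁, h₂, mul_add]

lemma comulTA_trev (v : TensorAlgebra k M) :
    comulTA k M (trev k M v) =
      TensorProduct.map (trev k M) (trev k M) (comulTA k M v) := by
  induction v using TensorAlgebra.induction with
  | algebraMap r =>
    simp [Algebra.TensorProduct.algebraMap_apply]
  | ι m =>
    rw [trev_ι, comulTA_ι,
      ← LinearMap.comp_apply (TensorProduct.map (trev k M) (trev k M)),
      ← TensorProduct.map_comp, trev_comp_ι]
  | mul a b ha hb =>
    rw [trev_mul, map_mul, map_mul, ha, hb, map_trev_trev_mul]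
  | add a b ha hb => simp only [map_add, ha, hb]

/-- The left counit law on the tensor algebra. -/
lemma counitTA_lid (v : TensorAlgebra k M) :
    TensorProduct.lid k (TensorAlgebra k M)
      (TensorProduct.map (counitTensorAlgebra k M).toLinearMap LinearMap.id
        (comulTA k M v)) = v := by
  have hEmul : ∀ s t : TensorAlgebra k M ⊗[k] TensorAlgebra k M,
      TensorProduct.lid k (TensorAlgebra k M)
        (TensorProduct.map (counitTensorAlgebra k M).toLinearMap LinearMap.id (s * t)) =
      TensorProduct.lid k (TensorAlgebra k M)
        (TensorProduct.map (counitTensorAlgebra k M).toLinearMap LinearMap.id s) *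
      TensorProduct.lid k (TensorAlgebra k M)
        (TensorProduct.map (counitTensorAlgebra k M).toLinearMap LinearMap.id t) := by
    intro s t
    induction s with
    | zero => simp
    | tmul a b =>
      induction t with
      | zero => simp
      | tmul c d =>
        simp only [Algebra.TensorProduct.tmul_mul_tmul, TensorProduct.map_tmul,
          LinearMap.id_coe, id_eq, TensorProduct.lid_tmul, AlgHom.toLinearMap_apply, map_mul]
        exact (smul_mul_smul_comm _ _ _ _).symm
      | add t₁ t₂ h₁ h₂ => rw [mul_add, map_add, map_add, h₁, h₂, map_add, map_add, mul_add]
    | add s₁ s₂ h₁ h₂ => rw [add_mul, map_add, map_add, h₁, h₂, map_add, map_add, add_mul]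
  induction v using TensorAlgebra.induction with
  | algebraMap r =>
    rw [AlgHom.commutes, Algebra.TensorProduct.algebraMap_apply, TensorProduct.map_tmul]
    rw [AlgHom.toLinearMap_apply, AlgHom.commutes]
    simp only [Algebra.algebraMap_self, RingHom.id_apply, LinearMap.id_coe, id_eq,
      TensorProduct.lid_tmul]
    rw [← Algebra.algebraMap_eq_smul_one]
  | ι m =>
    rw [comulTA_ι]
    have h4 : ∀ c : M ⊗[k] M,
        TensorProduct.lid k (TensorAlgebra k M)
          (TensorProduct.map (counitTensorAlgebra k M).toLinearMap LinearMap.id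
            (TensorProduct.map (TensorAlgebra.ι k) (TensorAlgebra.ι k) c)) =
        TensorAlgebra.ι k
          (TensorProduct.lid k M ((Coalgebra.counit (R := k)).rTensor M c)) := by
      intro c
      induction c with
      | zero => simp
      | tmul a b => simp [LinearMap.rTensor_tmul, TensorProduct.smul_tmul']
      | add c₁ c₂ h₁ h₂ => rw [map_add, map_add, map_add, h₁, h₂, map_add, map_add, map_add]
    rw [h4, Coalgebra.rTensor_counit_comul]
    simp
  | mul a b ha hb => rw [map_mul, hEmul, ha, hb]
  | add a b ha hb =>
    rw [map_add (comulTA k M), map_add, map_add, ha, hb]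

end TAux

/-- `π_x(w) = 0` iff `ε_{T(L)}(π_y(v)(τ w)) = 0` for all `v ∈ T(F)`. -/
theorem relation_iff_orthogonal_dual
    (k L F : Type*) [Field k]
    [AddCommGroup L] [Module k L] [Coalgebra k L] [FiniteDimensional k L]
    [AddCommGroup F] [Module k F] [Coalgebra k F] [FiniteDimensional k F]
    (x : L →ₗ[k] Module.End k F)
    (hx : ∀ l : L, Coalgebra.comul ∘ₗ (x l : F →ₗ[k] F) =
      TensorProduct.map (x l) LinearMap.id ∘ₗ Coalgebra.comul)
    (y : F →ₗ[k] Module.End k L)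
    (hy : ∀ f : F, Coalgebra.comul ∘ₗ (y f : L →ₗ[k] L) =
      TensorProduct.map (y f) LinearMap.id ∘ₗ Coalgebra.comul)
    (hxy : ∀ (l : L) (f : F),
      Coalgebra.counit (R := k) (x l f) = Coalgebra.counit (R := k) (y f l))
    (X : L →ₗ[k] Module.End k (TensorAlgebra k F))
    (hX1 : ∀ l : L, X l 1 = Coalgebra.counit (R := k) l • (1 : TensorAlgebra k F))
    (hX2 : ∀ (l : L) (f : F), X l (TensorAlgebra.ι k f) = TensorAlgebra.ι k (x l f))
    (hX3 : ∀ (l : L) (w₁ w₂ : TensorAlgebra k F), X l (w₁ * w₂) =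
      LinearMap.mul' k (TensorAlgebra k F)
        (TensorProduct.map (LinearMap.applyₗ w₁ ∘ₗ X) (LinearMap.applyₗ w₂ ∘ₗ X)
          (Coalgebra.comul (R := k) l)))
    (Y : F →ₗ[k] Module.End k (TensorAlgebra k L))
    (hY1 : ∀ f : F, Y f 1 = Coalgebra.counit (R := k) f • (1 : TensorAlgebra k L))
    (hY2 : ∀ (f : F) (l : L), Y f (TensorAlgebra.ι k l) = TensorAlgebra.ι k (y f l))
    (hY3 : ∀ (f : F) (w₁ w₂ : TensorAlgebra k L), Y f (w₁ * w₂) =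
      LinearMap.mul' k (TensorAlgebra k L)
        (TensorProduct.map (LinearMap.applyₗ w₁ ∘ₗ Y) (LinearMap.applyₗ w₂ ∘ₗ Y)
          (Coalgebra.comul (R := k) f)))
    (πx : TensorAlgebra k L →ₐ[k] Module.End k (TensorAlgebra k F))
    (hπx : ∀ l : L, πx (TensorAlgebra.ι k l) = X l)
    (πy : TensorAlgebra k F →ₐ[k] Module.End k (TensorAlgebra k L))
    (hπy : ∀ f : F, πy (TensorAlgebra.ι k f) = Y f)
    (τL : TensorAlgebra k L →ₗ[k] TensorAlgebra k L)
    (hτLbij : Function.Bijective τL) (hτL1 : τL 1 = 1)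
    (hτLι : ∀ l : L, τL (TensorAlgebra.ι k l) = TensorAlgebra.ι k l)
    (hτLm : ∀ a b : TensorAlgebra k L, τL (a * b) = τL b * τL a) :
    ∀ w : TensorAlgebra k L,
      πx w = 0 ↔ ∀ v : TensorAlgebra k F, counitTensorAlgebra k L (πy v (τL w)) = 0 := by
  intro w
  -- sum form of hX3
  have hX3' : ∀ (l : L) (R : Coalgebra.Repr k l (L × L)) (w₁ w₂ : TensorAlgebra k F),
      X l (w₁ * w₂) = ∑ i ∈ R.index, X (R.left i) w₁ * X (R.right i) w₂ := by
    intro l R w₁ w₂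
    rw [hX3, ← R.eq, map_sum, map_sum]
    simp [LinearMap.applyₗ_apply_apply]
  have hY3' : ∀ (f : F) (R : Coalgebra.Repr k f (F × F)) (w₁ w₂ : TensorAlgebra k L),
      Y f (w₁ * w₂) = ∑ i ∈ R.index, Y (R.left i) w₁ * Y (R.right i) w₂ := by
    intro f R w₁ w₂
    rw [hY3, ← R.eq, map_sum, map_sum]
    simp [LinearMap.applyₗ_apply_apply]
  -- counit expansion of y
  have hy' : ∀ (f : F) (l : L) (R : Coalgebra.Repr k l (L × L)),
      y f l = ∑ i ∈ R.index, Coalgebra.counit (R := k) (y f (R.left i)) • R.right i := by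
    intro f l R
    have h := LinearMap.congr_fun (hy f) l
    simp only [LinearMap.comp_apply] at h
    have h2 := congrArg ((Coalgebra.counit (R := k)).rTensor L) h
    rw [Coalgebra.rTensor_counit_comul, ← R.eq, map_sum, map_sum] at h2
    have h3 := congrArg (TensorProduct.lid k L) h2
    simpa [LinearMap.rTensor_tmul] using h3
  -- X l is right invariant on T(F)
  have hXinv : ∀ (v : TensorAlgebra k F) (l : L),
      comulTA k F (X l v) =
        TensorProduct.map (X l) LinearMap.id (comulTA k F v) := by
    intro v
    induction v using TensorAlgebra.induction with
    | algebraMap r =>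
      intro l
      simp only [Algebra.algebraMap_eq_smul_one, map_smul, hX1, map_one,
        Algebra.TensorProduct.one_def, TensorProduct.map_tmul, LinearMap.id_coe, id_eq,
        TensorProduct.smul_tmul', hX1]
    | ι f =>
      intro l
      rw [hX2, comulTA_ι, comulTA_ι]
      have h := LinearMap.congr_fun (hx l) f
      simp only [LinearMap.comp_apply] at h
      rw [h]
      have h4 : ∀ c : F ⊗[k] F,
          TensorProduct.map (X l) LinearMap.id
            (TensorProduct.map (TensorAlgebra.ι k) (TensorAlgebra.ι k) c) =
          TensorProduct.map (TensorAlgebra.ι k) (TensorAlgebra.ι k)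
            (TensorProduct.map (x l) LinearMap.id c) := by
        intro c
        induction c with
        | zero => simp
        | tmul a b => simp [hX2]
        | add c₁ c₂ h₁ h₂ => simp only [map_add, h₁, h₂]
      rw [h4]
    | mul a b ha hb =>
      intro l
      have R := Coalgebra.Repr.arbitrary k l
      have hSX : ∀ s t : TensorAlgebra k F ⊗[k] TensorAlgebra k F,
          TensorProduct.map (X l) LinearMap.id (s * t) =
          ∑ i ∈ R.index, TensorProduct.map (X (R.left i)) LinearMap.id s *
            TensorProduct.map (X (R.right i)) LinearMap.id t := by
        intro s t
        induction s with
        | zero => simp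
        | tmul s₁ s₂ =>
          induction t with
          | zero => simp
          | tmul t₁ t₂ =>
            simp only [Algebra.TensorProduct.tmul_mul_tmul, TensorProduct.map_tmul,
              LinearMap.id_coe, id_eq]
            rw [hX3' l R s₁ t₁, TensorProduct.sum_tmul]
          | add t₁ t₂ h₁ h₂ =>
            simp only [mul_add, map_add, h₁, h₂, Finset.sum_add_distrib]
        | add s₁ s₂ h₁ h₂ =>
          simp only [add_mul, map_add, h₁, h₂, Finset.sum_add_distrib]
      rw [hX3' l R a b, map_sum, map_mul (comulTA k F), hSX]
      refine Finset.sum_congr rfl fun i _ => ?_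
      rw [map_mul, ha (R.left i), hb (R.right i)]
    | add a b ha hb =>
      intro l
      simp only [map_add, ha l, hb l]
  -- π_x w' is right invariant on T(F)
  have hsmulmap : ∀ (r : k) (c : TensorAlgebra k F ⊗[k] TensorAlgebra k F),
      TensorProduct.map (r • (LinearMap.id : Module.End k (TensorAlgebra k F)))
        LinearMap.id c = r • c := by
    intro r c
    induction c with
    | zero => simp
    | tmul a b => simp [TensorProduct.smul_tmul']
    | add c₁ c₂ h₁ h₂ => simp only [map_add, h₁, h₂, smul_add]
  have hπxinv : ∀ (w' : TensorAlgebra k L) (v : TensorAlgebra k F),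
      comulTA k F (πx w' v) =
        TensorProduct.map (πx w') LinearMap.id (comulTA k F v) := by
    intro w'
    induction w' using TensorAlgebra.induction with
    | algebraMap r =>
      intro v
      rw [AlgHom.commutes, Module.algebraMap_end_apply, map_smul,
        Module.algebraMap_end_eq_smul_id, hsmulmap]
    | ι l => intro v; rw [hπx]; exact hXinv v l
    | mul a b ha hb =>
      intro v
      rw [map_mul, Module.End.mul_apply, ha, hb, ← LinearMap.comp_apply,
        ← TensorProduct.map_comp]
      rfl
    | add a b ha hb =>
      intro v
      simp only [map_add, LinearMap.add_apply, ha, hb, TensorProduct.map_add_left,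
        LinearMap.add_apply]
  -- expansion of π_x w' v
  have hBexp : ∀ (w' : TensorAlgebra k L) (v : TensorAlgebra k F)
      (s : Finset (TensorAlgebra k F × TensorAlgebra k F))
      (hs : comulTA k F v = ∑ p ∈ s, p.1 ⊗ₜ[k] p.2),
      πx w' v = ∑ p ∈ s, counitTensorAlgebra k F (πx w' p.1) • p.2 := by
    intro w' v s hs
    have h0 := counitTA_lid (πx w' v)
    rw [hπxinv, hs, map_sum, map_sum] at h0
    rw [← h0]
    simp
  -- π_y u 1 = ε_F u
  have hP0 : ∀ u : TensorAlgebra k F,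
      πy u (1 : TensorAlgebra k L) = counitTensorAlgebra k F u • 1 := by
    intro u
    induction u using TensorAlgebra.induction with
    | algebraMap r =>
      rw [AlgHom.commutes, Module.algebraMap_end_apply, AlgHom.commutes]
      simp
    | ι f => rw [hπy, hY1, counitTA_ι]
    | mul a b ha hb =>
      rw [map_mul, Module.End.mul_apply, hb, map_smul, ha, map_mul, smul_smul, mul_comm]
    | add a b ha hb => simp only [map_add, LinearMap.add_apply, ha, hb, add_smul]
  -- expansion of π_y u (ι l)
  have hW : ∀ (u : TensorAlgebra k F) (l : L) (R : Coalgebra.Repr k l (L × L)),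
      πy u (TensorAlgebra.ι k l) =
        ∑ i ∈ R.index,
          counitTensorAlgebra k L (πy u (TensorAlgebra.ι k (R.left i))) •
            TensorAlgebra.ι k (R.right i) := by
    have hcsum : ∀ (l : L) (R : Coalgebra.Repr k l (L × L)),
        ∑ i ∈ R.index, Coalgebra.counit (R := k) (R.left i) • R.right i = l := by
      intro l R
      have h := Coalgebra.sum_counit_tmul_eq (R := k) R
      have h2 := congrArg (TensorProduct.lid k L) h
      rw [map_sum] at h2
      simp only [TensorProduct.lid_tmul, one_smul] at h2
      exact h2
    intro u
    induction u using TensorAlgebra.induction with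
    | algebraMap r =>
      intro l R
      rw [AlgHom.commutes]
      simp only [Module.algebraMap_end_apply, map_smul, counitTA_ι, smul_eq_mul]
      calc r • TensorAlgebra.ι k l
          = r • ∑ i ∈ R.index,
              Coalgebra.counit (R := k) (R.left i) • TensorAlgebra.ι k (R.right i) := by
            congr 1
            conv_lhs => rw [← hcsum l R]
            rw [map_sum]
            exact Finset.sum_congr rfl fun i _ => map_smul _ _ _
        _ = ∑ i ∈ R.index, (r * Coalgebra.counit (R := k) (R.left i)) •
              TensorAlgebra.ι k (R.right i) := by
            rw [Finset.smul_sum]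
            exact Finset.sum_congr rfl fun i _ => by rw [smul_smul]
    | ι f =>
      intro l R
      rw [hπy, hY2, hy' f l R, map_sum]
      refine Finset.sum_congr rfl fun i _ => ?_
      rw [map_smul, hY2, counitTA_ι]
    | mul a b ha hb =>
      intro l R
      have key := Coalgebra.sum_tmul_tmul_eq (R := k) R
        (fun i => Coalgebra.Repr.arbitrary k (R.left i))
        (fun i => Coalgebra.Repr.arbitrary k (R.right i))
      set f' : L →ₗ[k] k := (counitTensorAlgebra k L).toLinearMap ∘ₗ
          (πy b : Module.End k (TensorAlgebra k L)) ∘ₗ TensorAlgebra.ι k with hf'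
      set g' : L →ₗ[k] k := (counitTensorAlgebra k L).toLinearMap ∘ₗ
          (πy a : Module.End k (TensorAlgebra k L)) ∘ₗ TensorAlgebra.ι k with hg'
      set Φ : L ⊗[k] (L ⊗[k] L) →ₗ[k] TensorAlgebra k L :=
        (TensorProduct.lid k (TensorAlgebra k L)).toLinearMap ∘ₗ
          TensorProduct.map f'
            ((TensorProduct.lid k (TensorAlgebra k L)).toLinearMap ∘ₗ
              TensorProduct.map g' (TensorAlgebra.ι k)) with hΦ
      have key2 := congrArg (fun z => Φ z) key
      simp only [map_sum] at key2
      simp only [hΦ, hf', hg', LinearMap.comp_apply, TensorProduct.map_tmul,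
        LinearEquiv.coe_coe, TensorProduct.lid_tmul, AlgHom.toLinearMap_apply,
        map_smul] at key2
      rw [map_mul πy a b]
      simp only [Module.End.mul_apply]
      rw [hb l R, map_sum]
      have lhs_eq : ∀ i ∈ R.index,
          πy a (counitTensorAlgebra k L (πy b (TensorAlgebra.ι k (R.left i))) •
              TensorAlgebra.ι k (R.right i)) =
          ∑ j ∈ (Coalgebra.Repr.arbitrary k (R.right i)).index,
            counitTensorAlgebra k L (πy b (TensorAlgebra.ι k (R.left i))) •
              (counitTensorAlgebra k L (πy a (TensorAlgebra.ι k
                  ((Coalgebra.Repr.arbitrary k (R.right i)).left j))) •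
                TensorAlgebra.ι k ((Coalgebra.Repr.arbitrary k (R.right i)).right j)) := by
        intro i _
        rw [map_smul, ha (R.right i) (Coalgebra.Repr.arbitrary k (R.right i)),
          Finset.smul_sum]
      have rhs_eq : ∀ i ∈ R.index,
          counitTensorAlgebra k L (πy a (πy b (TensorAlgebra.ι k (R.left i)))) •
              TensorAlgebra.ι k (R.right i) =
          ∑ j ∈ (Coalgebra.Repr.arbitrary k (R.left i)).index,
            counitTensorAlgebra k L (πy b (TensorAlgebra.ι k
                ((Coalgebra.Repr.arbitrary k (R.left i)).left j))) •
              (counitTensorAlgebra k L (πy a (TensorAlgebra.ι k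
                  ((Coalgebra.Repr.arbitrary k (R.left i)).right j))) •
                TensorAlgebra.ι k (R.right i)) := by
        intro i _
        rw [hb (R.left i) (Coalgebra.Repr.arbitrary k (R.left i)), map_sum, map_sum,
          Finset.sum_smul]
        exact Finset.sum_congr rfl fun j _ => by
          simp only [map_smul, smul_eq_mul, mul_smul]
      rw [Finset.sum_congr rfl lhs_eq, Finset.sum_congr rfl rhs_eq]
      exact key2.symm
    | add a b ha hb =>
      intro l R
      simp only [map_add, LinearMap.add_apply, ha _ R, hb _ R, map_add, add_smul,
        Finset.sum_add_distrib]
  -- measuring property of π_y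
  have hmeas : ∀ (u : TensorAlgebra k F) (s t : TensorAlgebra k L),
      πy u (s * t) =
        LinearMap.mul' k (TensorAlgebra k L)
          (TensorProduct.map (LinearMap.applyₗ s ∘ₗ πy.toLinearMap)
            (LinearMap.applyₗ t ∘ₗ πy.toLinearMap) (comulTA k F u)) := by
    intro u
    induction u using TensorAlgebra.induction with
    | algebraMap r =>
      intro s t
      rw [AlgHom.commutes (comulTA k F), AlgHom.commutes, Module.algebraMap_end_apply,
        Algebra.TensorProduct.algebraMap_apply, Algebra.algebraMap_eq_smul_one,
        ← TensorProduct.smul_tmul', map_smul, map_smul]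
      simp [LinearMap.applyₗ_apply_apply, map_one]
    | ι f =>
      intro s t
      have R := Coalgebra.Repr.arbitrary k f
      rw [hπy, hY3' f R, comulTA_ι, ← R.eq, map_sum, map_sum, map_sum]
      refine Finset.sum_congr rfl fun i _ => ?_
      simp [LinearMap.applyₗ_apply_apply, hπy]
    | mul a b ha hb =>
      intro s t
      rw [map_mul πy a b, Module.End.mul_apply, hb s t]
      have claim : ∀ c : TensorAlgebra k F ⊗[k] TensorAlgebra k F,
          πy a (LinearMap.mul' k (TensorAlgebra k L)
            (TensorProduct.map (LinearMap.applyₗ s ∘ₗ πy.toLinearMap)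
              (LinearMap.applyₗ t ∘ₗ πy.toLinearMap) c)) =
          LinearMap.mul' k (TensorAlgebra k L)
            (TensorProduct.map (LinearMap.applyₗ s ∘ₗ πy.toLinearMap)
              (LinearMap.applyₗ t ∘ₗ πy.toLinearMap) (comulTA k F a * c)) := by
        intro c
        induction c with
        | zero => simp
        | tmul b₁ b₂ =>
          have claim2 : ∀ d : TensorAlgebra k F ⊗[k] TensorAlgebra k F,
              LinearMap.mul' k (TensorAlgebra k L)
                (TensorProduct.map (LinearMap.applyₗ s ∘ₗ πy.toLinearMap)
                  (LinearMap.applyₗ t ∘ₗ πy.toLinearMap) (d * (b₁ ⊗ₜ[k] b₂))) =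
              LinearMap.mul' k (TensorAlgebra k L)
                (TensorProduct.map (LinearMap.applyₗ (πy b₁ s) ∘ₗ πy.toLinearMap)
                  (LinearMap.applyₗ (πy b₂ t) ∘ₗ πy.toLinearMap) d) := by
            intro d
            induction d with
            | zero => simp
            | tmul a₁ a₂ =>
              simp [Algebra.TensorProduct.tmul_mul_tmul, LinearMap.applyₗ_apply_apply, map_mul]
            | add d₁ d₂ h₁ h₂ =>
              simp only [add_mul, map_add, h₁, h₂]
          rw [claim2 (comulTA k F a)]
          have hstep : (TensorProduct.map (LinearMap.applyₗ s ∘ₗ πy.toLinearMap)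
              (LinearMap.applyₗ t ∘ₗ πy.toLinearMap)) (b₁ ⊗ₜ[k] b₂)
              = (πy b₁ s) ⊗ₜ[k] (πy b₂ t) := by
            simp [LinearMap.applyₗ_apply_apply]
          rw [hstep, LinearMap.mul'_apply, ha (πy b₁ s) (πy b₂ t)]
        | add c₁ c₂ h₁ h₂ =>
          simp only [map_add, mul_add, h₁, h₂]
      rw [claim (comulTA k F b), map_mul (comulTA k F) a b]
    | add a b ha hb =>
      intro s t
      simp only [map_add, LinearMap.add_apply, ha s t, hb s t, add_mul]
    -- ε_F ∘ τ_F = ε_F etc. come from the generic section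
  -- pairing at a generator of T(L)
  have hPι : ∀ (v : TensorAlgebra k F) (l : L),
      counitTensorAlgebra k F (X l v) =
        counitTensorAlgebra k L (πy (trev k F v) (TensorAlgebra.ι k l)) := by
    intro v
    induction v using TensorAlgebra.induction with
    | algebraMap r =>
      intro l
      rw [trev_algebraMap, AlgHom.commutes, Module.algebraMap_end_apply,
        Algebra.algebraMap_eq_smul_one, map_smul, map_smul, hX1, map_smul, map_smul,
        counitTA_ι]
      simp
    | ι f =>
      intro l
      rw [hX2, counitTA_ι, hxy, trev_ι, hπy, hY2, counitTA_ι]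
    | mul a b ha hb =>
      intro l
      have R := Coalgebra.Repr.arbitrary k l
      rw [hX3' l R a b, map_sum, trev_mul, map_mul, Module.End.mul_apply,
        hW (trev k F a) l R, map_sum, map_sum]
      refine Finset.sum_congr rfl fun i _ => ?_
      rw [map_mul, ha (R.left i), hb (R.right i)]
      simp only [map_smul, smul_eq_mul]
    | add a b ha hb =>
      intro l
      simp only [map_add, LinearMap.add_apply, ha l, hb l]
  -- the full pairing identity
  have hPair : ∀ (w' : TensorAlgebra k L) (v : TensorAlgebra k F),
      counitTensorAlgebra k F (πx w' v) =
        counitTensorAlgebra k L (πy (trev k F v) (τL w')) := by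
    intro w'
    induction w' using TensorAlgebra.induction with
    | algebraMap r =>
      intro v
      have hτalg : τL (algebraMap k (TensorAlgebra k L) r)
          = algebraMap k (TensorAlgebra k L) r := by
        rw [Algebra.algebraMap_eq_smul_one, map_smul, hτL1]
      rw [hτalg, AlgHom.commutes, Module.algebraMap_end_apply, map_smul,
        Algebra.algebraMap_eq_smul_one, map_smul, hP0, map_smul, map_smul]
      simp [counitTA_trev]
    | ι l =>
      intro v
      rw [hπx, hτLι]
      exact hPι v l
    | mul a b ha hb =>
      intro v
      obtain ⟨s, hs⟩ := TensorProduct.exists_finset (comulTA k F v)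
      rw [map_mul, Module.End.mul_apply, hBexp b v s hs, map_sum, map_sum]
      have lhs_eq : ∀ p ∈ s,
          counitTensorAlgebra k F (πx a (counitTensorAlgebra k F (πx b p.1) • p.2)) =
          counitTensorAlgebra k L (πy (trev k F p.1) (τL b)) *
            counitTensorAlgebra k L (πy (trev k F p.2) (τL a)) := by
        intro p _
        rw [map_smul, map_smul, smul_eq_mul, ha p.2, hb p.1]
      rw [Finset.sum_congr rfl lhs_eq]
      -- now the right hand side
      rw [hτLm, hmeas (trev k F v) (τL b) (τL a), comulTA_trev, hs, map_sum, map_sum,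
        map_sum, map_sum]
      refine (Finset.sum_congr rfl fun p _ => ?_).symm
      simp only [TensorProduct.map_tmul, LinearMap.comp_apply, LinearMap.mul'_apply,
        map_mul]
      simp [LinearMap.applyₗ_apply_apply]
    | add a b ha hb =>
      intro v
      simp only [map_add, LinearMap.add_apply, ha v, hb v]
  -- conclusion
  constructor
  · intro h v
    have := hPair w (trev k F v)
    rw [h, trev_trev] at this
    simp only [LinearMap.zero_apply, map_zero] at this
    exact this.symm
  · intro h
    have hz : ∀ v : TensorAlgebra k F, counitTensorAlgebra k F (πx w v) = 0 := by
      intro v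
      rw [hPair w v]
      exact h (trev k F v)
    apply LinearMap.ext
    intro v
    obtain ⟨s, hs⟩ := TensorProduct.exists_finset (comulTA k F v)
    rw [hBexp w v s hs]
    simp [hz]
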